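/- Let I₁ be the linear interpolation operator on nodes x_{j-1}, x_j with spacing h, and let x̄_j = x_j - Δt with 0 < Δt ≤ h. For sequences ρ_j = u_j - U_j (u smooth grid values, U arbitrary), the interpolated error satisfies |I₁(ρ)(x̄_j) + (f - I₁f)(x̄_j)| ≤ max_j |ρ_j| + (M/2)·Δt·h, where f is the underlying C² function with grid values u_j and |f''| ≤ M. In particular |f(x̄_j) - I₁(U)(x̄_j)| ≤ max_j |ρ_j| + (M/2)·h·Δt. -/

import Mathlib

/-!
If `|f''| ≤ M` then `y ↦ M/2 · y² ± f y` are convex, so each lies below its chord. Since the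
chord of `y²` over `[a, b]` exceeds `y²` at `s a + t b` by exactly `s t (b - a)²`, the linear
interpolant of `f` is off by at most `M/2 · s t (b - a)²`, which at the back-tracked point is
`M/2 · Δt (h - Δt) ≤ M/2 · h Δt`. The interpolant of the data errors `ρ` is a convex combination
of two of them, hence bounded by `max |ρ|`.
-/

theorem convexOn_univ_add_half_mul_sq {g : ℝ → ℝ} (hg : ContDiff ℝ 2 g) {M : ℝ}
    (hM : ∀ ξ, -M ≤ iteratedDeriv 2 g ξ) :
    ConvexOn ℝ Set.univ (fun y => g y + M / 2 * y ^ 2) := by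
  have hg' : Differentiable ℝ g := hg.differentiable two_ne_zero
  have hg'' : Differentiable ℝ (deriv g) := hg.differentiable_deriv_two
  refine convexOn_of_hasDerivWithinAt2_nonneg convex_univ
    (f' := fun y => deriv g y + M * y) (f'' := fun y => iteratedDeriv 2 g y + M)
    (hg.continuous.add (by fun_prop)).continuousOn (fun y _ => ?_) (fun y _ => ?_)
    (fun y _ => by linarith [hM y])
  · have := (hg' y).hasDerivAt.add (((hasDerivAt_id y).pow 2).const_mul (M / 2))
    exact (this.congr_deriv (by simp; ring)).hasDerivWithinAt
  · have := (hg'' y).hasDerivAt.add ((hasDerivAt_id y).const_mul M)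
    rw [iteratedDeriv_succ, iteratedDeriv_one]
    exact (this.congr_deriv (by simp)).hasDerivWithinAt

theorem abs_sub_linear_interpolation_le {f : ℝ → ℝ} (hf : ContDiff ℝ 2 f) {M : ℝ}
    (hM : ∀ ξ, |iteratedDeriv 2 f ξ| ≤ M) (a b : ℝ) {s t : ℝ} (hs : 0 ≤ s) (ht : 0 ≤ t)
    (hst : s + t = 1) :
    |f (s * a + t * b) - (s * f a + t * f b)| ≤ M / 2 * (s * t * (b - a) ^ 2) := by
  have hchord : s * a ^ 2 + t * b ^ 2 - (s * a + t * b) ^ 2 = s * t * (b - a) ^ 2 := by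
    obtain rfl : s = 1 - t := by linarith
    ring
  have below_chord : ∀ g : ℝ → ℝ, ContDiff ℝ 2 g → (∀ ξ, -M ≤ iteratedDeriv 2 g ξ) →
      g (s * a + t * b) - (s * g a + t * g b) ≤ M / 2 * (s * t * (b - a) ^ 2) := by
    intro g hg hgM
    have := (convexOn_univ_add_half_mul_sq hg hgM).2 (Set.mem_univ a) (Set.mem_univ b) hs ht hst
    simp only [smul_eq_mul] at this
    linear_combination this + M / 2 * hchord
  rw [abs_le]
  constructor
  · have := below_chord (fun y => -f y) hf.neg fun ξ => by
      rw [iteratedDeriv_fun_neg]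
      linarith [(abs_le.1 (hM ξ)).2]
    linarith
  · exact below_chord f hf fun ξ => (abs_le.1 (hM ξ)).1

theorem abs_mul_add_mul_le_of_abs_le {s t p q S : ℝ} (hs : 0 ≤ s) (ht : 0 ≤ t)
    (hst : s + t = 1) (hp : |p| ≤ S) (hq : |q| ≤ S) : |s * p + t * q| ≤ S :=
  calc |s * p + t * q| ≤ s * |p| + t * |q| := by
        simpa only [abs_mul, abs_of_nonneg hs, abs_of_nonneg ht] using abs_add_le (s * p) (t * q)
    _ ≤ s * S + t * S := by gcongr
    _ = S := by rw [← add_mul, hst, one_mul]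

theorem abs_sub_interpolant_le {f : ℝ → ℝ} (hf : ContDiff ℝ 2 f) {M : ℝ}
    (hM : ∀ ξ, |iteratedDeriv 2 f ξ| ≤ M) {a b s t : ℝ} (hs : 0 ≤ s) (ht : 0 ≤ t)
    (hst : s + t = 1) {Ua Ub S : ℝ} (ha : |f a - Ua| ≤ S) (hb : |f b - Ub| ≤ S) :
    |f (s * a + t * b) - (s * Ua + t * Ub)| ≤ S + M / 2 * (s * t * (b - a) ^ 2) := by
  have hf_err := abs_sub_linear_interpolation_le hf hM a b hs ht hst
  have hdata_err := abs_mul_add_mul_le_of_abs_le hs ht hst ha hb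
  calc |f (s * a + t * b) - (s * Ua + t * Ub)|
      = |(f (s * a + t * b) - (s * f a + t * f b)) + (s * (f a - Ua) + t * (f b - Ub))| := by
        ring_nf
    _ ≤ S + M / 2 * (s * t * (b - a) ^ 2) := (abs_add_le _ _).trans (by linarith)

/-- Interpolated error bound used in the convergence proof: with grid
`x_j = j h`, `u_j = f(x_j)` for a `C²` function `f` with `|f''| ≤ M2`,
arbitrary values `U_j`, errors `ρ_j = u_j - U_j`, and the back-tracked point
`x̄_j = x_j - Δt ∈ [x_{j-1}, x_j]`, the linearly interpolated value satisfies
`|f(x̄_j) - I₁(U)(x̄_j)| ≤ max_j |ρ_j| + (M2/2) h Δt`. -/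
theorem interpolated_error_bound
    (f : ℝ → ℝ) (hf : ContDiff ℝ 2 f) (M2 : ℝ)
    (hM2 : ∀ ξ : ℝ, |iteratedDeriv 2 f ξ| ≤ M2)
    (h Δt : ℝ) (hh : 0 < h) (hΔt : 0 < Δt) (hΔth : Δt ≤ h)
    (Mgrid : ℕ)
    (U : ℕ → ℝ)
    (j : ℕ) (hj : 1 ≤ j) (hjM : j ≤ Mgrid) :
    |f ((j : ℝ) * h - Δt)
        - (U (j - 1) * ((j : ℝ) * h - ((j : ℝ) * h - Δt)) / h
           + U j * (((j : ℝ) * h - Δt) - ((j : ℝ) - 1) * h) / h)|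
      ≤ (Finset.range (Mgrid + 1)).sup' (by simp)
          (fun i => |f ((i : ℝ) * h) - U i|)
        + M2 / 2 * h * Δt := by
  set S := (Finset.range (Mgrid + 1)).sup' (by simp) (fun i => |f ((i : ℝ) * h) - U i|)
  have hρ : ∀ i ≤ Mgrid, |f ((i : ℝ) * h) - U i| ≤ S := fun i hi =>
    Finset.le_sup' (fun i : ℕ => |f ((i : ℝ) * h) - U i|) (Finset.mem_range.2 (by omega))
  have hρ_left : |f (((j : ℝ) - 1) * h) - U (j - 1)| ≤ S := by
    simpa [Nat.cast_sub hj] using hρ (j - 1) (by omega)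
  set s := Δt / h
  set t := (h - Δt) / h
  have hs : 0 ≤ s := by positivity
  have ht : 0 ≤ t := div_nonneg (by linarith) hh.le
  have hst : s + t = 1 := by simp only [s, t]; field_simp; ring
  have hweights : U (j - 1) * ((j : ℝ) * h - ((j : ℝ) * h - Δt)) / h
      + U j * (((j : ℝ) * h - Δt) - ((j : ℝ) - 1) * h) / h = s * U (j - 1) + t * U j := by
    simp only [s, t]; ring
  have hpoint : (j : ℝ) * h - Δt = s * (((j : ℝ) - 1) * h) + t * ((j : ℝ) * h) := by
    simp only [s, t]; field_simp; ring
  have hst_sq : s * t * ((j : ℝ) * h - ((j : ℝ) - 1) * h) ^ 2 = Δt * (h - Δt) := by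
    simp only [s, t]; field_simp; ring
  have hM2_nonneg : 0 ≤ M2 := (abs_nonneg _).trans (hM2 0)
  rw [hweights, hpoint]
  calc _ ≤ S + M2 / 2 * (s * t * ((j : ℝ) * h - ((j : ℝ) - 1) * h) ^ 2) :=
        abs_sub_interpolant_le hf hM2 hs ht hst hρ_left (hρ j hjM)
    _ ≤ S + M2 / 2 * h * Δt := by rw [hst_sq]; nlinarith [mul_nonneg hM2_nonneg hΔt.le]
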